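/- Let C ∈ ℂ^r have Euclidean norm 1, let Φ = (φ₁,…,φ_K) be an orthonormal system in L²(Ω), and set Ψ = π(C,Φ). Then for every ζ ∈ L²(Ω) with ⟨ζ, φ_m⟩ = 0 for all 1 ≤ m ≤ K, every ξ ∈ L²(Ω), and all 1 ≤ k,l ≤ K: ⟨(∂Ψ/∂φ_k)[ζ], (∂Ψ/∂φ_l)[ξ]⟩_{L²(Ω^N)} = γ_kl(C) · ⟨ζ, ξ⟩_{L²(Ω)}. -/

import Mathlib

open MeasureTheory Complex
open scoped BigOperators ComplexConjugate ENNReal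

noncomputable section

abbrev E3 : Type := EuclideanSpace ℝ (Fin 3)

def mOm (Ω : Set E3) : Measure E3 := MeasureTheory.volume.restrict Ω

def mN (Ω : Set E3) (n : ℕ) : Measure (Fin n → E3) := Measure.pi fun _ => mOm Ω

def ip2 (Ω : Set E3) (f g : E3 → ℂ) : ℂ := ∫ x, f x * conj (g x) ∂ (mOm Ω)

def ipN (Ω : Set E3) (n : ℕ) (f g : (Fin n → E3) → ℂ) : ℂ :=
  ∫ x, f x * conj (g x) ∂ (mN Ω n)

def slater (n : ℕ) (φ : Fin n → E3 → ℂ) : (Fin n → E3) → ℂ := fun x =>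
  ((Real.sqrt (Nat.factorial n) : ℂ))⁻¹ * Matrix.det (Matrix.of fun i j : Fin n => φ i (x j))

def SigmaNK (N K : ℕ) : Type := {s : Finset (Fin K) // s.card = N}

instance (N K : ℕ) : Fintype (SigmaNK N K) :=
  inferInstanceAs (Fintype {s : Finset (Fin K) // s.card = N})

instance (N K : ℕ) : DecidableEq (SigmaNK N K) :=
  inferInstanceAs (DecidableEq {s : Finset (Fin K) // s.card = N})

def embOf {N K : ℕ} (σ : SigmaNK N K) : Fin N → Fin K := fun i => σ.1.orderEmbOfFin σ.2 i

def slaterSel (N K : ℕ) (Φ : Fin K → E3 → ℂ) (σ : SigmaNK N K) : (Fin N → E3) → ℂ :=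
  slater N fun i => Φ (embOf σ i)

def mc (N K : ℕ) (C : SigmaNK N K → ℂ) (Φ : Fin K → E3 → ℂ) : (Fin N → E3) → ℂ :=
  fun x => ∑ σ : SigmaNK N K, C σ * slaterSel N K Φ σ x

def posIn {K : ℕ} (s : Finset (Fin K)) (i : Fin K) : ℕ :=
  (Finset.sort s (· ≤ ·)).idxOf i

def gamma1 (N K : ℕ) (C : SigmaNK N K → ℂ) (i j : Fin K) : ℂ :=
  ∑ σ : SigmaNK N K, ∑ τ : SigmaNK N K,
    if i ∈ σ.1 ∧ j ∈ τ.1 ∧ σ.1.erase i = τ.1.erase j then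
      (-1 : ℂ) ^ (posIn σ.1 i + posIn τ.1 j) * C σ * conj (C τ)
    else 0

def sgn2 {K : ℕ} (s : Finset (Fin K)) (i j : Fin K) : ℂ :=
  (if i = j then 0 else if j < i then 1 else -1) *
    (-1 : ℂ) ^ (posIn s i + posIn s j)

def gamma2 (N K : ℕ) (C : SigmaNK N K → ℂ) (i j k l : Fin K) : ℂ :=
  (1 / 2 : ℂ) * ∑ σ : SigmaNK N K, ∑ τ : SigmaNK N K,
    if i ∈ σ.1 ∧ j ∈ σ.1 ∧ k ∈ τ.1 ∧ l ∈ τ.1 ∧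
        (σ.1.erase i).erase j = (τ.1.erase k).erase l then
      sgn2 σ.1 i j * sgn2 τ.1 k l * C σ * conj (C τ)
    else 0

def GammaM (N K : ℕ) (C : SigmaNK N K → ℂ) : Matrix (Fin K) (Fin K) ℂ :=
  Matrix.of fun i j => conj (gamma1 N K C i j)

def OrthoSys (Ω : Set E3) {K : ℕ} (Φ : Fin K → E3 → ℂ) : Prop :=
  (∀ k, MemLp (Φ k) 2 (mOm Ω)) ∧
  ∀ i j, ip2 Ω (Φ i) (Φ j) = if i = j then 1 else 0

def dPhi (Ω : Set E3) (n : ℕ) (Ξ : (Fin n → E3) → ℂ) (φ ζ : E3 → ℂ) :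
    (Fin n → E3) → ℂ := fun x =>
  ∑ i : Fin n, ζ (x i) * ∫ y, Ξ (Function.update x i y) * conj (φ y) ∂ (mOm Ω)

def gammaFun (Ω : Set E3) (N : ℕ) (Ψ : (Fin (N+1) → E3) → ℂ) (f : E3 → ℂ) : E3 → ℂ :=
  fun x => ((N : ℂ) + 1) *
    ∫ y, (∫ Z, Ψ (Fin.cons x Z) * conj (Ψ (Fin.cons y Z)) ∂ (mN Ω N)) * f y ∂ (mOm Ω)

/-!
Expanding `Ψ = ∑ σ, C σ • Φ_σ`, the derivative `∂/∂φ_k` is linear in `Ψ`, and the cofactor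
expansion of a determinant along the column of the moved point gives
`∂Φ_σ/∂φ_k [ζ] = ∑ a, ⟨φ_{σ a}, φ_k⟩ · (Φ_σ with φ_{σ a} replaced by ζ)`; by orthonormality only
`σ a = k` survives. Löwdin's formula `⟨det f, det g⟩ = det (⟨f i, g j⟩)` turns the inner product
of two such determinants into a Gram determinant. Since `ζ ⟂ Φ`, its row `a` is `⟨ζ, ξ⟩` in
column `b` and zero elsewhere, so Laplace expansion leaves `(-1)^(a+b) ⟨ζ, ξ⟩` times the Gram
determinant of the orbitals `σ ∖ {k}` against `τ ∖ {l}`. Both families are listed increasingly,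
so that determinant is `1` when `σ ∖ {k} = τ ∖ {l}` and has a zero row otherwise. Summing against
`C σ * conj (C τ)` gives `γ_kl(C) ⟨ζ, ξ⟩`.
-/

section Integration

variable {X : Type*}

theorem sum_mul_conj_sum {ι κ : Type*} [Fintype ι] [Fintype κ] (a : ι → ℂ) (b : κ → ℂ)
    (F : ι → X → ℂ) (G : κ → X → ℂ) (x : X) :
    (∑ i, a i * F i x) * conj (∑ j, b j * G j x) =
      ∑ i, ∑ j, a i * conj (b j) * (F i x * conj (G j x)) := by
  simp only [map_sum, map_mul, Finset.sum_mul_sum]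
  exact Finset.sum_congr rfl fun i _ => Finset.sum_congr rfl fun j _ => by ring

variable [MeasurableSpace X] {μ : Measure X}

theorem MeasureTheory.MemLp.integrable_mul_conj {f g : X → ℂ} (hf : MemLp f 2 μ)
    (hg : MemLp g 2 μ) : Integrable (fun x => f x * conj (g x)) μ :=
  hf.integrable_mul hg.star

theorem MeasureTheory.MemLp.update {n : ℕ} {f : Fin n → X → ℂ} {g : X → ℂ}
    (hf : ∀ i, MemLp (f i) 2 μ) (hg : MemLp g 2 μ) (r i : Fin n) :
    MemLp (Function.update f r g i) 2 μ :=
  (Function.forall_update_iff f fun _ h => MemLp h 2 μ).2 ⟨hg, fun i _ => hf i⟩ i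

theorem integrable_sum_mul_conj_sum {ι κ : Type*} [Fintype ι] [Fintype κ] (a : ι → ℂ)
    (b : κ → ℂ) (F : ι → X → ℂ) (G : κ → X → ℂ)
    (h : ∀ i j, Integrable (fun x => F i x * conj (G j x)) μ) :
    Integrable (fun x => (∑ i, a i * F i x) * conj (∑ j, b j * G j x)) μ := by
  simp only [sum_mul_conj_sum]
  exact integrable_finsetSum _ fun i _ => integrable_finsetSum _ fun j _ =>
    (h i j).const_mul _

theorem integral_sum_mul_conj_sum {ι κ : Type*} [Fintype ι] [Fintype κ] (a : ι → ℂ)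
    (b : κ → ℂ) (F : ι → X → ℂ) (G : κ → X → ℂ)
    (h : ∀ i j, Integrable (fun x => F i x * conj (G j x)) μ) :
    ∫ x, (∑ i, a i * F i x) * conj (∑ j, b j * G j x) ∂μ =
      ∑ i, ∑ j, a i * conj (b j) * ∫ x, F i x * conj (G j x) ∂μ := by
  simp only [sum_mul_conj_sum]
  rw [integral_finsetSum _ fun i _ => integrable_finsetSum _ fun j _ => (h i j).const_mul _]
  refine Finset.sum_congr rfl fun i _ => ?_
  rw [integral_finsetSum _ fun j _ => (h i j).const_mul _]
  simp only [integral_const_mul]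

theorem integrable_sum_mul_conj {ι : Type*} [Fintype ι] (c : ι → ℂ) {f : ι → X → ℂ}
    {g : X → ℂ} (hf : ∀ i, MemLp (f i) 2 μ) (hg : MemLp g 2 μ) :
    Integrable (fun x => (∑ i, c i * f i x) * conj (g x)) μ := by
  simp only [Finset.sum_mul, mul_assoc]
  exact integrable_finsetSum _ fun i _ => ((hf i).integrable_mul_conj hg).const_mul (c i)

theorem integral_sum_mul_conj {ι : Type*} [Fintype ι] (c : ι → ℂ) {f : ι → X → ℂ}
    {g : X → ℂ} (hf : ∀ i, MemLp (f i) 2 μ) (hg : MemLp g 2 μ) :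
    ∫ x, (∑ i, c i * f i x) * conj (g x) ∂μ = ∑ i, c i * ∫ x, f i x * conj (g x) ∂μ := by
  simp only [Finset.sum_mul, mul_assoc]
  rw [integral_finsetSum _ fun i _ => ((hf i).integrable_mul_conj hg).const_mul (c i)]
  simp only [integral_const_mul]

variable [SigmaFinite μ] {ι : Type*} [Fintype ι]

theorem integrable_prod_mul_conj_prod {f g : ι → X → ℂ} (hf : ∀ i, MemLp (f i) 2 μ)
    (hg : ∀ i, MemLp (g i) 2 μ) :
    Integrable (fun x : ι → X => (∏ i, f i (x i)) * conj (∏ i, g i (x i)))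
      (Measure.pi fun _ => μ) := by
  simp only [map_prod, ← Finset.prod_mul_distrib]
  exact Integrable.fintype_prod fun i => (hf i).integrable_mul_conj (hg i)

theorem integral_prod_mul_conj_prod (f g : ι → X → ℂ) :
    ∫ x : ι → X, (∏ i, f i (x i)) * conj (∏ i, g i (x i)) ∂(Measure.pi fun _ => μ) =
      ∏ i, ∫ y, f i y * conj (g i y) ∂μ := by
  simp only [map_prod, ← Finset.prod_mul_distrib]
  exact integral_fintype_prod_eq_prod (fun i y => f i y * conj (g i y))

end Integration

instance mOm.instSigmaFinite (Ω : Set E3) : SigmaFinite (mOm Ω) :=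
  inferInstanceAs (SigmaFinite (MeasureTheory.volume.restrict Ω))

theorem ipN_sum_sum {Ω : Set E3} {n : ℕ} {ι κ : Type*} [Fintype ι] [Fintype κ] (a : ι → ℂ)
    (b : κ → ℂ) (F : ι → (Fin n → E3) → ℂ) (G : κ → (Fin n → E3) → ℂ)
    (h : ∀ i j, Integrable (fun x => F i x * conj (G j x)) (mN Ω n)) :
    ipN Ω n (fun x => ∑ i, a i * F i x) (fun x => ∑ j, b j * G j x) =
      ∑ i, ∑ j, a i * conj (b j) * ipN Ω n (F i) (G j) :=
  integral_sum_mul_conj_sum a b F G h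

namespace Matrix

variable {R : Type*} [CommRing R]

theorem det_updateCol_eq_sum_adjugate {n : Type*} [Fintype n] [DecidableEq n]
    (A : Matrix n n R) (i : n) (v : n → R) :
    (A.updateCol i v).det = ∑ r, adjugate A i r * v r := by
  rw [← cramer_apply, cramer_eq_adjugate_mulVec]
  rfl

theorem det_updateRow_eq_sum_adjugate {n : Type*} [Fintype n] [DecidableEq n]
    (A : Matrix n n R) (r : n) (w : n → R) :
    (A.updateRow r w).det = ∑ i, w i * adjugate A i r := by
  rw [← det_transpose, ← updateCol_transpose, det_updateCol_eq_sum_adjugate,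
    ← adjugate_transpose]
  simp only [transpose_apply, mul_comm]

theorem sum_sign_mul_prod_eq_det {n : Type*} [Fintype n] [DecidableEq n]
    (G : Matrix n n R) (π : Equiv.Perm n) :
    ∑ ρ : Equiv.Perm n, ((Equiv.Perm.sign ρ : ℤ) : R) * ∏ b, G (π b) (ρ b) =
      (Equiv.Perm.sign π : ℤ) * G.det := by
  rw [← det_permute, ← det_transpose, det_apply']
  rfl

theorem det_eq_of_row_eq_single {n : ℕ} (A : Matrix (Fin (n + 1)) (Fin (n + 1)) R)
    (a b : Fin (n + 1)) (c : R) (h : ∀ j, A a j = if j = b then c else 0) :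
    A.det = (-1) ^ (a + b : ℕ) * c * (A.submatrix a.succAbove b.succAbove).det := by
  rw [det_succ_row A a, Finset.sum_eq_single b (fun j _ hj => by simp [h, hj]) (by simp), h,
    if_pos rfl]

theorem det_ite_eq_of_strictMono {α : Type*} [LinearOrder α] {n : ℕ} {u v : Fin n → α}
    (hu : StrictMono u) (hv : StrictMono v) :
    (of fun i j => if u i = v j then (1 : R) else 0).det = if u = v then 1 else 0 := by
  classical
  by_cases hsub : ∀ i, u i ∈ Finset.univ.image v
  · have hcard : (Finset.univ.image v).card = n := by
      rw [Finset.card_image_of_injective _ hv.injective, Finset.card_univ, Fintype.card_fin]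
    have huv : u = v := (Finset.orderEmbOfFin_unique hcard hsub hu).trans
      (Finset.orderEmbOfFin_unique hcard
        (fun i => Finset.mem_image_of_mem v (Finset.mem_univ i)) hv).symm
    subst huv
    have hone : (of fun i j => if u i = u j then (1 : R) else 0) = 1 := by
      ext i j
      simp [one_apply, hu.injective.eq_iff]
    rw [if_pos rfl, hone, det_one]
  · obtain ⟨i, hi⟩ := not_forall.mp hsub
    have huv : u ≠ v := fun huv => hi (huv ▸ Finset.mem_image_of_mem v (Finset.mem_univ _))
    rw [if_neg huv]
    refine det_eq_zero_of_row_eq_zero i fun j => ?_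
    simp only [of_apply, ite_eq_right_iff]
    exact fun h => absurd (h ▸ Finset.mem_image_of_mem v (Finset.mem_univ _)) hi

end Matrix

section Slater

open Matrix

variable {Ω : Set E3} {n : ℕ}

theorem slater_eq_sum (f : Fin n → E3 → ℂ) (x : Fin n → E3) :
    slater n f x = ∑ π : Equiv.Perm (Fin n),
      ((Real.sqrt n.factorial : ℂ)⁻¹ * (Equiv.Perm.sign π : ℤ)) * ∏ j, f (π j) (x j) := by
  simp only [slater, det_apply', of_apply, Finset.mul_sum, mul_assoc]

theorem slater_update_point_eq (f : Fin n → E3 → ℂ) (x : Fin n → E3) (i : Fin n)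
    (y : E3) :
    slater n f (Function.update x i y) = (Real.sqrt n.factorial : ℂ)⁻¹ *
      ∑ r, adjugate (of fun r j => f r (x j)) i r * f r y := by
  have hcol : (of fun r j => f r (Function.update x i y j)) =
      (of fun r j => f r (x j)).updateCol i fun r => f r y := by
    ext r j
    rcases eq_or_ne j i with rfl | hj <;> simp [*]
  rw [slater, hcol, det_updateCol_eq_sum_adjugate]

theorem slater_update_orbital_eq (f : Fin n → E3 → ℂ) (x : Fin n → E3) (r : Fin n)
    (ζ : E3 → ℂ) :
    slater n (Function.update f r ζ) x = (Real.sqrt n.factorial : ℂ)⁻¹ *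
      ∑ i, ζ (x i) * adjugate (of fun r j => f r (x j)) i r := by
  have hrow : (of fun r' j => Function.update f r ζ r' (x j)) =
      (of fun r j => f r (x j)).updateRow r fun j => ζ (x j) := by
    ext r' j
    rcases eq_or_ne r' r with rfl | hr <;> simp [updateRow_apply, *]
  rw [slater, hrow, det_updateRow_eq_sum_adjugate]


theorem integrable_slater_update_mul_conj {f : Fin n → E3 → ℂ}
    {φ : E3 → ℂ} (hf : ∀ r, MemLp (f r) 2 (mOm Ω)) (hφ : MemLp φ 2 (mOm Ω))
    (x : Fin n → E3) (i : Fin n) :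
    Integrable (fun y => slater n f (Function.update x i y) * conj (φ y)) (mOm Ω) := by
  simp only [slater_update_point_eq, mul_assoc]
  exact (integrable_sum_mul_conj _ hf hφ).const_mul _

theorem dPhi_sum {ι : Type*} [Fintype ι] (a : ι → ℂ)
    (F : ι → (Fin n → E3) → ℂ) (φ ζ : E3 → ℂ)
    (hF : ∀ α x i, Integrable (fun y => F α (Function.update x i y) * conj (φ y)) (mOm Ω)) :
    dPhi Ω n (fun x => ∑ α, a α * F α x) φ ζ = fun x => ∑ α, a α * dPhi Ω n (F α) φ ζ x := by
  ext x
  have hint : ∀ i, ∫ y, (∑ α, a α * F α (Function.update x i y)) * conj (φ y) ∂mOm Ω =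
      ∑ α, a α * ∫ y, F α (Function.update x i y) * conj (φ y) ∂mOm Ω := fun i => by
    simp only [Finset.sum_mul, mul_assoc]
    rw [integral_finsetSum _ fun α _ => (hF α x i).const_mul _]
    simp only [integral_const_mul]
  simp only [dPhi, hint, Finset.mul_sum]
  rw [Finset.sum_comm]
  exact Finset.sum_congr rfl fun α _ => Finset.sum_congr rfl fun i _ => by ring

theorem dPhi_slater {f : Fin n → E3 → ℂ} {φ : E3 → ℂ}
    (hf : ∀ r, MemLp (f r) 2 (mOm Ω)) (hφ : MemLp φ 2 (mOm Ω)) (ζ : E3 → ℂ) :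
    dPhi Ω n (slater n f) φ ζ =
      fun x => ∑ r, ip2 Ω (f r) φ * slater n (Function.update f r ζ) x := by
  ext x
  have hint : ∀ i, ∫ y, slater n f (Function.update x i y) * conj (φ y) ∂mOm Ω =
      (Real.sqrt n.factorial : ℂ)⁻¹ *
        ∑ r, adjugate (of fun r j => f r (x j)) i r * ip2 Ω (f r) φ := fun i => by
    simp only [slater_update_point_eq, mul_assoc, integral_const_mul]
    exact congrArg _ (integral_sum_mul_conj _ hf hφ)
  simp only [dPhi, hint, slater_update_orbital_eq, Finset.mul_sum]
  rw [Finset.sum_comm]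
  exact Finset.sum_congr rfl fun r _ => Finset.sum_congr rfl fun i _ => by ring

theorem integrable_slater_mul_conj {f g : Fin n → E3 → ℂ}
    (hf : ∀ i, MemLp (f i) 2 (mOm Ω)) (hg : ∀ i, MemLp (g i) 2 (mOm Ω)) :
    Integrable (fun x => slater n f x * conj (slater n g x)) (mN Ω n) := by
  simp only [slater_eq_sum]
  exact integrable_sum_mul_conj_sum _ _ _ _ fun π ρ =>
    integrable_prod_mul_conj_prod (fun j => hf (π j)) (fun j => hg (ρ j))

theorem integrable_dPhi_slater_mul_conj {f g : Fin n → E3 → ℂ}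
    {φ ψ ζ ξ : E3 → ℂ} (hf : ∀ i, MemLp (f i) 2 (mOm Ω)) (hg : ∀ i, MemLp (g i) 2 (mOm Ω))
    (hφ : MemLp φ 2 (mOm Ω)) (hψ : MemLp ψ 2 (mOm Ω)) (hζ : MemLp ζ 2 (mOm Ω))
    (hξ : MemLp ξ 2 (mOm Ω)) :
    Integrable (fun x => dPhi Ω n (slater n f) φ ζ x * conj (dPhi Ω n (slater n g) ψ ξ x))
      (mN Ω n) := by
  rw [dPhi_slater hf hφ, dPhi_slater hg hψ]
  exact integrable_sum_mul_conj_sum _ _ _ _ fun r s =>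
    integrable_slater_mul_conj (MemLp.update hf hζ r) (MemLp.update hg hξ s)

theorem inv_sqrt_factorial_mul_conj :
    (Real.sqrt n.factorial : ℂ)⁻¹ * conj (Real.sqrt n.factorial : ℂ)⁻¹ * n.factorial = 1 := by
  rw [map_inv₀, conj_ofReal, ← mul_inv, ← ofReal_mul, Real.mul_self_sqrt (Nat.cast_nonneg _),
    ofReal_natCast, inv_mul_cancel₀ (Nat.cast_ne_zero.mpr n.factorial_ne_zero)]

theorem ipN_slater {f g : Fin n → E3 → ℂ}
    (hf : ∀ i, MemLp (f i) 2 (mOm Ω)) (hg : ∀ i, MemLp (g i) 2 (mOm Ω)) :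
    ipN Ω n (slater n f) (slater n g) = (of fun i j => ip2 Ω (f i) (g j)).det := by
  simp only [ipN, mN, slater_eq_sum]
  rw [integral_sum_mul_conj_sum _ _ _ _ fun π ρ =>
    integrable_prod_mul_conj_prod (fun j => hf (π j)) (fun j => hg (ρ j))]
  set G : Matrix (Fin n) (Fin n) ℂ := of fun i j => ip2 Ω (f i) (g j)
  set c : ℂ := (Real.sqrt n.factorial : ℂ)⁻¹
  have hsign : ∀ π : Equiv.Perm (Fin n),
      ((Equiv.Perm.sign π : ℤ) : ℂ) * (Equiv.Perm.sign π : ℤ) = 1 := fun π => by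
    rw [← Int.cast_mul, ← Units.val_mul, Int.units_mul_self, Units.val_one, Int.cast_one]
  calc ∑ π : Equiv.Perm (Fin n), ∑ ρ : Equiv.Perm (Fin n),
        c * (Equiv.Perm.sign π : ℤ) * conj (c * (Equiv.Perm.sign ρ : ℤ)) *
          ∫ x : Fin n → E3, (∏ j, f (π j) (x j)) * conj (∏ j, g (ρ j) (x j)) ∂mN Ω n
      = c * conj c * ∑ π : Equiv.Perm (Fin n), (Equiv.Perm.sign π : ℤ) *
          ∑ ρ : Equiv.Perm (Fin n), (Equiv.Perm.sign ρ : ℤ) * ∏ j, G (π j) (ρ j) := by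
        simp only [mN, integral_prod_mul_conj_prod, map_mul, map_intCast, Finset.mul_sum]
        exact Finset.sum_congr rfl fun π _ => Finset.sum_congr rfl fun ρ _ => by
          simp only [G, of_apply, ip2]; ring
    _ = c * conj c * n.factorial * G.det := by
        simp only [sum_sign_mul_prod_eq_det, ← mul_assoc, hsign, one_mul, Finset.sum_const,
          Finset.card_univ, Fintype.card_perm, Fintype.card_fin, nsmul_eq_mul]
    _ = G.det := by rw [inv_sqrt_factorial_mul_conj, one_mul]

end Slater

theorem strictMono_embOf {N K : ℕ} (σ : SigmaNK N K) : StrictMono (embOf σ) :=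
  (σ.1.orderEmbOfFin σ.2).strictMono

theorem posIn_embOf {N K : ℕ} (σ : SigmaNK N K) (a : Fin N) : posIn σ.1 (embOf σ a) = a := by
  rw [posIn, embOf, Finset.orderEmbOfFin_apply]
  exact (Finset.sort_nodup _ _).idxOf_getElem _ _

theorem range_embOf_comp_succAbove {n K : ℕ} (σ : SigmaNK (n + 1) K) (a : Fin (n + 1)) :
    Set.range (embOf σ ∘ a.succAbove) = ↑(σ.1.erase (embOf σ a)) := by
  rw [Set.range_comp, Fin.range_succAbove,
    Set.image_compl_eq_range_sdiff_image (strictMono_embOf σ).injective, Set.image_singleton,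
    Finset.coe_erase]
  exact congrArg (· \ _) (Finset.range_orderEmbOfFin _ _)

theorem sum_ite_embOf_eq {N K : ℕ} (σ : SigmaNK N K) (k : Fin K) (c : ℂ) :
    ∑ a, (if embOf σ a = k then c else 0) = if k ∈ σ.1 then c else 0 := by
  have himage : Finset.univ.image (embOf σ) = σ.1 := Finset.image_orderEmbOfFin_univ _ _
  calc ∑ a, (if embOf σ a = k then c else 0)
      = ∑ j ∈ Finset.univ.image (embOf σ), if j = k then c else 0 :=
        (Finset.sum_image (f := fun j => if j = k then c else 0)
          (strictMono_embOf σ).injective.injOn).symm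
    _ = if k ∈ σ.1 then c else 0 := by simp only [himage, Finset.sum_ite_eq']

open Matrix in
theorem det_gram_update {Ω : Set E3} {n K : ℕ} {Φ : Fin K → E3 → ℂ} (hΦ : OrthoSys Ω Φ)
    {ζ ξ : E3 → ℂ} (hperp : ∀ m, ip2 Ω ζ (Φ m) = 0) (σ τ : SigmaNK (n + 1) K)
    (a b : Fin (n + 1)) :
    (of fun i j => ip2 Ω (Function.update (fun r => Φ (embOf σ r)) a ζ i)
      (Function.update (fun r => Φ (embOf τ r)) b ξ j)).det =
      (-1) ^ (a + b : ℕ) * ip2 Ω ζ ξ *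
        if σ.1.erase (embOf σ a) = τ.1.erase (embOf τ b) then 1 else 0 := by
  rw [det_eq_of_row_eq_single _ a b (ip2 Ω ζ ξ) fun j => ?_]
  · congr 1
    have hminor : (of fun i j => ip2 Ω (Function.update (fun r => Φ (embOf σ r)) a ζ i)
          (Function.update (fun r => Φ (embOf τ r)) b ξ j)).submatrix a.succAbove b.succAbove =
        of fun i j => if (embOf σ ∘ a.succAbove) i = (embOf τ ∘ b.succAbove) j then 1 else 0 := by
      ext i j
      simp [hΦ.2]
    have hu := (strictMono_embOf σ).comp (Fin.strictMono_succAbove a)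
    have hv := (strictMono_embOf τ).comp (Fin.strictMono_succAbove b)
    have hiff : embOf σ ∘ a.succAbove = embOf τ ∘ b.succAbove ↔
        σ.1.erase (embOf σ a) = τ.1.erase (embOf τ b) := by
      rw [← hu.range_inj hv, range_embOf_comp_succAbove, range_embOf_comp_succAbove,
        Finset.coe_inj]
    rw [hminor, det_ite_eq_of_strictMono hu hv]
    simp only [hiff]
  · rcases eq_or_ne j b with rfl | hj
    · simp
    · simp [hj, hperp]

theorem ipN_dPhi_slaterSel {Ω : Set E3} {n K : ℕ} {Φ : Fin K → E3 → ℂ} (hΦ : OrthoSys Ω Φ)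
    {ζ ξ : E3 → ℂ} (hζ : MemLp ζ 2 (mOm Ω)) (hξ : MemLp ξ 2 (mOm Ω))
    (hperp : ∀ m, ip2 Ω ζ (Φ m) = 0) (σ τ : SigmaNK (n + 1) K) (k l : Fin K) :
    ipN Ω (n + 1) (dPhi Ω (n + 1) (slaterSel (n + 1) K Φ σ) (Φ k) ζ)
        (dPhi Ω (n + 1) (slaterSel (n + 1) K Φ τ) (Φ l) ξ) =
      if k ∈ σ.1 ∧ l ∈ τ.1 ∧ σ.1.erase k = τ.1.erase l then
        (-1) ^ (posIn σ.1 k + posIn τ.1 l) * ip2 Ω ζ ξ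
      else 0 := by
  have hσ : ∀ r, MemLp (Φ (embOf σ r)) 2 (mOm Ω) := fun r => hΦ.1 _
  have hτ : ∀ r, MemLp (Φ (embOf τ r)) 2 (mOm Ω) := fun r => hΦ.1 _
  rw [slaterSel, slaterSel, dPhi_slater hσ (hΦ.1 k), dPhi_slater hτ (hΦ.1 l),
    ipN_sum_sum _ _ _ _ fun a b =>
      integrable_slater_mul_conj (MemLp.update hσ hζ a) (MemLp.update hτ hξ b)]
  simp only [ipN_slater (MemLp.update hσ hζ _) (MemLp.update hτ hξ _), det_gram_update hΦ hperp,
    hΦ.2]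
  have hterm : ∀ a b, ((if embOf σ a = k then 1 else 0) * conj (if embOf τ b = l then 1 else 0) *
      ((-1) ^ (a + b : ℕ) * ip2 Ω ζ ξ *
        if σ.1.erase (embOf σ a) = τ.1.erase (embOf τ b) then 1 else 0) : ℂ) =
      if embOf σ a = k then
        (if embOf τ b = l then
          (-1) ^ (posIn σ.1 k + posIn τ.1 l) * ip2 Ω ζ ξ *
            if σ.1.erase k = τ.1.erase l then 1 else 0
        else 0)
      else 0 := fun a b => by
    by_cases hk : embOf σ a = k
    · by_cases hl : embOf τ b = l
      · subst hk hl
        simp [posIn_embOf]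
      · simp [hl]
    · simp [hk]
  simp only [hterm, Finset.sum_ite_irrel, sum_ite_embOf_eq]
  by_cases hk : k ∈ σ.1 <;> by_cases hl : l ∈ τ.1 <;> simp [hk, hl, sum_ite_embOf_eq]

theorem dPsi_inner_eq_gamma_general (Ω : Set E3) (N K : ℕ)
    (hN : 1 ≤ N)
    (C : SigmaNK N K → ℂ)
    (Φ : Fin K → E3 → ℂ) (hΦ : OrthoSys Ω Φ)
    (ζ ξ : E3 → ℂ) (hζ : MemLp ζ 2 (mOm Ω)) (hξ : MemLp ξ 2 (mOm Ω))
    (hperp : ∀ m : Fin K, ip2 Ω ζ (Φ m) = 0) :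
    ∀ k l : Fin K,
      ipN Ω N (dPhi Ω N (mc N K C Φ) (Φ k) ζ) (dPhi Ω N (mc N K C Φ) (Φ l) ξ) =
        gamma1 N K C k l * ip2 Ω ζ ξ := by
  intro k l
  obtain ⟨n, rfl⟩ := Nat.exists_eq_add_of_le' hN
  have hsel : ∀ (σ : SigmaNK (n + 1) K) r, MemLp (Φ (embOf σ r)) 2 (mOm Ω) := fun σ r => hΦ.1 _
  have hdPhi : ∀ m g, dPhi Ω (n + 1) (mc (n + 1) K C Φ) (Φ m) g =
      fun x => ∑ σ, C σ * dPhi Ω (n + 1) (slaterSel (n + 1) K Φ σ) (Φ m) g x := fun m g =>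
    dPhi_sum C _ _ _ fun σ => integrable_slater_update_mul_conj (hsel σ) (hΦ.1 m)
  rw [hdPhi, hdPhi, ipN_sum_sum _ _ _ _ fun σ τ => ?_]
  · simp only [ipN_dPhi_slaterSel hΦ hζ hξ hperp, gamma1, Finset.sum_mul]
    refine Finset.sum_congr rfl fun σ _ => Finset.sum_congr rfl fun τ _ => ?_
    split_ifs <;> ring
  · exact integrable_dPhi_slater_mul_conj (hsel σ) (hsel τ) (hΦ.1 k) (hΦ.1 l) hζ hξ

/-- for Ψ = π(C,Φ), ζ ⟂ span{Φ} and arbitrary ξ ∈ L²(Ω),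
⟨∂Ψ/∂φ_k[ζ], ∂Ψ/∂φ_l[ξ]⟩ = γ_kl(C) ⟨ζ,ξ⟩. -/
theorem dPsi_inner_eq_gamma (Ω : Set E3) (hΩ : IsOpen Ω) (N K : ℕ)
    (hN : 1 ≤ N) (hNK : N ≤ K)
    (C : SigmaNK N K → ℂ) (hC : ∑ σ : SigmaNK N K, ‖C σ‖ ^ 2 = 1)
    (Φ : Fin K → E3 → ℂ) (hΦ : OrthoSys Ω Φ)
    (ζ ξ : E3 → ℂ) (hζ : MemLp ζ 2 (mOm Ω)) (hξ : MemLp ξ 2 (mOm Ω))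
    (hperp : ∀ m : Fin K, ip2 Ω ζ (Φ m) = 0) :
    ∀ k l : Fin K,
      ipN Ω N (dPhi Ω N (mc N K C Φ) (Φ k) ζ) (dPhi Ω N (mc N K C Φ) (Φ l) ξ) =
        gamma1 N K C k l * ip2 Ω ζ ξ :=
  dPsi_inner_eq_gamma_general Ω N K hN C Φ hΦ ζ ξ hζ hξ hperp
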